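/- Let (R₁₂, R₁₃, R₂₃) be a random triple whose law satisfies symmetry under permutations of replica indices and ultrametricity (almost surely R₁₂ ≥ min(R₁₃, R₂₃) and permutations thereof). If f : [0,1]³ → ℝ is continuous, symmetric, and vanishes on the diagonal (f(x,x,x) = 0), then E[f(R₁₂,R₁₃,R₂₃)] = (3/2) E[f(R₁₂∨R₁₃, R₁₂∧R₁₃, R₁₂∧R₁₃)]. -/
import Mathlib


open MeasureTheory

private lemma ultra_pointwise (f : ℝ → ℝ → ℝ → ℝ)
    (hs1 : ∀ x y z, f x y z = f y x z) (hs2 : ∀ x y z, f x y z = f x z y)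
    (hfdiag : ∀ x, f x x x = 0)
    (a b c : ℝ) (h1 : min b c ≤ a) (h2 : min a c ≤ b) (h3 : min a b ≤ c) :
    2 * f a b c = f (max a b) (min a b) (min a b) + f (max a c) (min a c) (min a c)
      + f (max b c) (min b c) (min b c) := by
  rcases le_total a b with hab | hab <;> rcases le_total a c with hac | hac <;>
    rcases le_total b c with hbc | hbc
  · -- a≤b, a≤c, b≤c : a = b
    have : a = b := le_antisymm hab (by rwa [min_eq_left hbc] at h1)
    subst this
    rw [max_self, min_self, max_eq_right hac, min_eq_left hac, hfdiag]
    have h := (hs2 a a c).trans (hs1 a c a)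
    linarith
  · -- a≤b, a≤c, c≤b : a = c
    have : a = c := le_antisymm hac (by rwa [min_eq_right hbc] at h1)
    subst this
    rw [max_eq_right hab, min_eq_left hab, max_self, min_self, hfdiag,
      max_eq_left hab, min_eq_right hab]
    have h := hs1 a b a
    linarith
  · -- a≤b, c≤a, b≤c : all equal
    have e1 : a = b := le_antisymm hab (hbc.trans hac)
    have e2 : a = c := le_antisymm (hab.trans hbc) hac
    subst e1; subst e2
    simp [hfdiag]
  · -- a≤b, c≤a, c≤b : a = c
    have : a = c := le_antisymm (by rwa [min_eq_left hab] at h3) hac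
    subst this
    rw [max_eq_right hab, min_eq_left hab, max_self, min_self, hfdiag,
      max_eq_left hab, min_eq_right hab]
    have h := hs1 a b a
    linarith
  · -- b≤a, a≤c, b≤c : a = b
    have : a = b := le_antisymm (by rwa [min_eq_left hac] at h2) hab
    subst this
    rw [max_self, min_self, max_eq_right hac, min_eq_left hac, hfdiag]
    have h := (hs2 a a c).trans (hs1 a c a)
    linarith
  · -- b≤a, a≤c, c≤b : all equal
    have e1 : a = b := le_antisymm (hac.trans hbc) hab
    have e2 : a = c := le_antisymm hac (hbc.trans hab)
    subst e1; subst e2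
    simp [hfdiag]
  · -- b≤a, c≤a, b≤c : b = c
    have : b = c := le_antisymm hbc (by rwa [min_eq_right hac] at h2)
    subst this
    rw [max_eq_left hab, min_eq_right hab, max_self, min_self, hfdiag]
    linarith
  · -- b≤a, c≤a, c≤b : b = c
    have : b = c := le_antisymm (by rwa [min_eq_right hab] at h3) hbc
    subst this
    rw [max_eq_left hab, min_eq_right hab, max_self, min_self, hfdiag]
    linarith

/-- For a replica-symmetric, ultrametric random triple of overlaps and a continuous symmetric
`f` vanishing on the diagonal,
`E[f(R₁₂,R₁₃,R₂₃)] = (3/2) E[f(R₁₂∨R₁₃, R₁₂∧R₁₃, R₁₂∧R₁₃)]`. -/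
theorem stmt_3 {Ω : Type*} [MeasurableSpace Ω] (μ : Measure Ω) [IsProbabilityMeasure μ]
    (R12 R13 R23 : Ω → ℝ)
    (hmeas : Measurable R12 ∧ Measurable R13 ∧ Measurable R23)
    (hrange : ∀ ω, R12 ω ∈ Set.Icc (0:ℝ) 1 ∧ R13 ω ∈ Set.Icc (0:ℝ) 1 ∧ R23 ω ∈ Set.Icc (0:ℝ) 1)
    -- replica symmetry: the law of the triple is invariant under the permutations of
    -- (R₁₂, R₁₃, R₂₃) induced by permutations of the replica indices {1,2,3}
    (hsym : ∀ e : Equiv.Perm (Fin 3),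
      Measure.map (fun ω => fun i : Fin 3 => ![R12 ω, R13 ω, R23 ω] (e i)) μ
        = Measure.map (fun ω => ![R12 ω, R13 ω, R23 ω]) μ)
    -- ultrametricity: a.s. each overlap dominates the minimum of the other two
    (hultra : ∀ᵐ ω ∂μ, min (R13 ω) (R23 ω) ≤ R12 ω ∧ min (R12 ω) (R23 ω) ≤ R13 ω ∧
      min (R12 ω) (R13 ω) ≤ R23 ω)
    (f : ℝ → ℝ → ℝ → ℝ)
    (hfcont : Continuous fun p : ℝ × ℝ × ℝ => f p.1 p.2.1 p.2.2)
    (hfsymm : (∀ x y z, f x y z = f y x z) ∧ (∀ x y z, f x y z = f x z y))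
    (hfdiag : ∀ x, f x x x = 0) :
    (∫ ω, f (R12 ω) (R13 ω) (R23 ω) ∂μ)
      = (3 / 2) * ∫ ω, f (max (R12 ω) (R13 ω)) (min (R12 ω) (R13 ω)) (min (R12 ω) (R13 ω)) ∂μ := by
  obtain ⟨h12, h13, h23⟩ := hmeas
  obtain ⟨hs1, hs2⟩ := hfsymm
  have hcoord : ∀ j : Fin 3, Measurable fun ω => ![R12 ω, R13 ω, R23 ω] j := by
    intro j
    fin_cases j
    · simpa using h12
    · simpa using h13
    · simpa using h23
  have hTmeas : Measurable fun ω => ![R12 ω, R13 ω, R23 ω] :=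
    measurable_pi_lambda _ hcoord
  set F : (Fin 3 → ℝ) → ℝ :=
    fun v => f (max (v 0) (v 1)) (min (v 0) (v 1)) (min (v 0) (v 1)) with hFdef
  have hFcont : Continuous F := by
    have h1 : Continuous fun v : Fin 3 → ℝ =>
        ((max (v 0) (v 1), min (v 0) (v 1), min (v 0) (v 1)) : ℝ × ℝ × ℝ) := by fun_prop
    exact hfcont.comp h1
  have key : ∀ e : Equiv.Perm (Fin 3),
      ∫ ω, F (fun i => ![R12 ω, R13 ω, R23 ω] (e i)) ∂μ
        = ∫ ω, F (![R12 ω, R13 ω, R23 ω]) ∂μ := by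
    intro e
    have hTe : Measurable fun ω => (fun i => ![R12 ω, R13 ω, R23 ω] (e i)) :=
      measurable_pi_lambda _ fun i => hcoord (e i)
    rw [← integral_map hTe.aemeasurable hFcont.aestronglyMeasurable, hsym e,
        integral_map hTmeas.aemeasurable hFcont.aestronglyMeasurable]
  -- bound on f over the cube
  obtain ⟨C, hC⟩ : ∃ C, ∀ p ∈ (Set.Icc (0:ℝ) 1 ×ˢ Set.Icc (0:ℝ) 1 ×ˢ Set.Icc (0:ℝ) 1),
      ‖f p.1 p.2.1 p.2.2‖ ≤ C :=
    (isCompact_Icc.prod (isCompact_Icc.prod isCompact_Icc)).exists_bound_of_continuousOn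
      hfcont.continuousOn
  have hint : ∀ (x y z : Ω → ℝ), Measurable x → Measurable y → Measurable z →
      (∀ ω, x ω ∈ Set.Icc (0:ℝ) 1) → (∀ ω, y ω ∈ Set.Icc (0:ℝ) 1) →
      (∀ ω, z ω ∈ Set.Icc (0:ℝ) 1) →
      Integrable (fun ω => f (x ω) (y ω) (z ω)) μ := by
    intro x y z hx hy hz hx1 hy1 hz1
    refine ⟨(hfcont.measurable.comp (hx.prodMk (hy.prodMk hz))).aestronglyMeasurable, ?_⟩
    exact HasFiniteIntegral.of_bounded (C := C)
      (ae_of_all _ fun ω => hC (x ω, y ω, z ω) ⟨hx1 ω, hy1 ω, hz1 ω⟩)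
  have hmaxmem : ∀ (u v : ℝ), u ∈ Set.Icc (0:ℝ) 1 → v ∈ Set.Icc (0:ℝ) 1 →
      max u v ∈ Set.Icc (0:ℝ) 1 ∧ min u v ∈ Set.Icc (0:ℝ) 1 := by
    intro u v hu hv
    exact ⟨⟨le_max_of_le_left hu.1, max_le hu.2 hv.2⟩, ⟨le_min hu.1 hv.1, min_le_of_left_le hu.2⟩⟩
  have I0 : Integrable (fun ω => f (R12 ω) (R13 ω) (R23 ω)) μ :=
    hint _ _ _ h12 h13 h23 (fun ω => (hrange ω).1) (fun ω => (hrange ω).2.1)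
      (fun ω => (hrange ω).2.2)
  have I1 : Integrable (fun ω => f (max (R12 ω) (R13 ω)) (min (R12 ω) (R13 ω))
      (min (R12 ω) (R13 ω))) μ :=
    hint _ _ _ (h12.max h13) (h12.min h13) (h12.min h13)
      (fun ω => (hmaxmem _ _ (hrange ω).1 (hrange ω).2.1).1)
      (fun ω => (hmaxmem _ _ (hrange ω).1 (hrange ω).2.1).2)
      (fun ω => (hmaxmem _ _ (hrange ω).1 (hrange ω).2.1).2)
  have I2 : Integrable (fun ω => f (max (R12 ω) (R23 ω)) (min (R12 ω) (R23 ω))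
      (min (R12 ω) (R23 ω))) μ :=
    hint _ _ _ (h12.max h23) (h12.min h23) (h12.min h23)
      (fun ω => (hmaxmem _ _ (hrange ω).1 (hrange ω).2.2).1)
      (fun ω => (hmaxmem _ _ (hrange ω).1 (hrange ω).2.2).2)
      (fun ω => (hmaxmem _ _ (hrange ω).1 (hrange ω).2.2).2)
  have I3 : Integrable (fun ω => f (max (R13 ω) (R23 ω)) (min (R13 ω) (R23 ω))
      (min (R13 ω) (R23 ω))) μ :=
    hint _ _ _ (h13.max h23) (h13.min h23) (h13.min h23)
      (fun ω => (hmaxmem _ _ (hrange ω).2.1 (hrange ω).2.2).1)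
      (fun ω => (hmaxmem _ _ (hrange ω).2.1 (hrange ω).2.2).2)
      (fun ω => (hmaxmem _ _ (hrange ω).2.1 (hrange ω).2.2).2)
  -- identify the three permuted integrals
  have hswap0 : ((Equiv.swap (1:Fin 3) 2) 0 = 0) := by decide
  have hswap1 : ((Equiv.swap (1:Fin 3) 2) 1 = 2) := by decide
  have hrot0 : ((finRotate 3) (0:Fin 3) = 1) := by decide
  have hrot1 : ((finRotate 3) (1:Fin 3) = 2) := by decide
  have key2 := key (Equiv.swap 1 2)
  have key3 := key (finRotate 3)
  simp only [hFdef, hswap0, hswap1, Matrix.cons_val_zero, Matrix.cons_val_one,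
    Matrix.head_cons, Matrix.cons_val_two, Matrix.tail_cons] at key2
  simp only [hFdef, hrot0, hrot1, Matrix.cons_val_zero, Matrix.cons_val_one,
    Matrix.head_cons, Matrix.cons_val_two, Matrix.tail_cons] at key3
  -- a.e. pointwise identity
  have hpt : ∀ᵐ ω ∂μ, 2 * f (R12 ω) (R13 ω) (R23 ω) =
      f (max (R12 ω) (R13 ω)) (min (R12 ω) (R13 ω)) (min (R12 ω) (R13 ω)) +
      f (max (R12 ω) (R23 ω)) (min (R12 ω) (R23 ω)) (min (R12 ω) (R23 ω)) +
      f (max (R13 ω) (R23 ω)) (min (R13 ω) (R23 ω)) (min (R13 ω) (R23 ω)) := by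
    filter_upwards [hultra] with ω hω
    exact ultra_pointwise f hs1 hs2 hfdiag _ _ _ hω.1 hω.2.1 hω.2.2
  have heq : 2 * ∫ ω, f (R12 ω) (R13 ω) (R23 ω) ∂μ =
      (∫ ω, f (max (R12 ω) (R13 ω)) (min (R12 ω) (R13 ω)) (min (R12 ω) (R13 ω)) ∂μ) +
      (∫ ω, f (max (R12 ω) (R23 ω)) (min (R12 ω) (R23 ω)) (min (R12 ω) (R23 ω)) ∂μ) +
      (∫ ω, f (max (R13 ω) (R23 ω)) (min (R13 ω) (R23 ω)) (min (R13 ω) (R23 ω)) ∂μ) := by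
    have I12 : Integrable (fun ω =>
        f (max (R12 ω) (R13 ω)) (min (R12 ω) (R13 ω)) (min (R12 ω) (R13 ω)) +
        f (max (R12 ω) (R23 ω)) (min (R12 ω) (R23 ω)) (min (R12 ω) (R23 ω))) μ := I1.add I2
    have h := integral_congr_ae hpt
    rw [integral_const_mul, integral_add I12 I3, integral_add I1 I2] at h
    exact h
  rw [key2, key3] at heq
  linarith
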